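/- arXiv:2604.01441 — 3 statements merged into one kernel-verified Lean document; each statement's English description precedes it below -/
import Mathlib

section
/- Multiplication by a strictly positive matrix is nonexpansive in Hilbert's projective metric: if A is an n×n matrix with all entries strictly positive and p, q ∈ ℝ^n_{>0}, then Hilb(Ap, Aq) ≤ Hilb(p, q). -/
open scoped BigOperators

/-- Hilbert's projective metric on strictly positive vectors in `ℝ^n`. -/
noncomputable def Hilb {n : ℕ} (p q : Fin n → ℝ) : ℝ :=
  Real.log ((⨆ i, p i / q i) / (⨅ i, p i / q i))

/-- Multiplication by a strictly positive matrix is nonexpansive in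
Hilbert's projective metric: `Hilb(Ap, Aq) ≤ Hilb(p, q)`. -/
theorem hilb_positive_matrix_nonexpansive {n : ℕ} (hn : 0 < n)
    (A : Matrix (Fin n) (Fin n) ℝ) (hA : ∀ i j, 0 < A i j)
    (p q : Fin n → ℝ) (hp : ∀ i, 0 < p i) (hq : ∀ i, 0 < q i) :
    Hilb (A.mulVec p) (A.mulVec q) ≤ Hilb p q := by
  haveI hne : Nonempty (Fin n) := Fin.pos_iff_nonempty.mp hn
  have hApos : ∀ (v : Fin n → ℝ), (∀ i, 0 < v i) → ∀ i, 0 < A.mulVec v i := by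
    intro v hv i
    simp only [Matrix.mulVec, dotProduct]
    exact Finset.sum_pos (fun j _ => mul_pos (hA i j) (hv j)) Finset.univ_nonempty
  set M := ⨆ i, p i / q i with hM
  set m := ⨅ i, p i / q i with hm
  have hbddA : BddAbove (Set.range fun i => p i / q i) := (Set.finite_range _).bddAbove
  have hbddB : BddBelow (Set.range fun i => p i / q i) := (Set.finite_range _).bddBelow
  have hfpos : ∀ i, 0 < p i / q i := fun i => div_pos (hp i) (hq i)
  have hm_pos : 0 < m := by
    have hmem : sInf (Set.range fun i => p i / q i) ∈ Set.range fun i => p i / q i :=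
      Set.Nonempty.csInf_mem (Set.range_nonempty _) (Set.finite_range _)
    obtain ⟨j, hj⟩ := hmem
    rw [hm, iInf, ← hj]
    exact hfpos j
  have hpM : ∀ j, p j ≤ M * q j := fun j =>
    (div_le_iff₀ (hq j)).mp (le_ciSup hbddA j)
  have hpm : ∀ j, m * q j ≤ p j := fun j =>
    (le_div_iff₀ (hq j)).mp (ciInf_le hbddB j)
  have hAq : ∀ i, 0 < A.mulVec q i := hApos q hq
  have hAp : ∀ i, 0 < A.mulVec p i := hApos p hp
  have hup : ∀ i, A.mulVec p i / A.mulVec q i ≤ M := by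
    intro i
    rw [div_le_iff₀ (hAq i)]
    calc A.mulVec p i = ∑ j, A i j * p j := rfl
      _ ≤ ∑ j, A i j * (M * q j) := by
          apply Finset.sum_le_sum
          intro j _
          exact mul_le_mul_of_nonneg_left (hpM j) (hA i j).le
      _ = M * ∑ j, A i j * q j := by
          rw [Finset.mul_sum]; exact Finset.sum_congr rfl fun j _ => by ring
      _ = M * A.mulVec q i := rfl
  have hdown : ∀ i, m ≤ A.mulVec p i / A.mulVec q i := by
    intro i
    rw [le_div_iff₀ (hAq i)]
    calc m * A.mulVec q i = m * ∑ j, A i j * q j := rfl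
      _ = ∑ j, A i j * (m * q j) := by
          rw [Finset.mul_sum]; exact Finset.sum_congr rfl fun j _ => by ring
      _ ≤ ∑ j, A i j * p j := by
          apply Finset.sum_le_sum
          intro j _
          exact mul_le_mul_of_nonneg_left (hpm j) (hA i j).le
      _ = A.mulVec p i := rfl
  have hsup : (⨆ i, A.mulVec p i / A.mulVec q i) ≤ M := ciSup_le hup
  have hinf : m ≤ (⨅ i, A.mulVec p i / A.mulVec q i) := le_ciInf hdown
  have hinfA_pos : 0 < (⨅ i, A.mulVec p i / A.mulVec q i) := lt_of_lt_of_le hm_pos hinf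
  have hsupA_pos : 0 < (⨆ i, A.mulVec p i / A.mulVec q i) := by
    refine lt_of_lt_of_le (div_pos (hAp (Classical.arbitrary _)) (hAq (Classical.arbitrary _))) ?_
    exact le_ciSup (f := fun i => A.mulVec p i / A.mulVec q i) ((Set.finite_range _).bddAbove) _
  unfold Hilb
  apply Real.log_le_log (div_pos hsupA_pos hinfA_pos)
  exact div_le_div₀ (le_trans hsupA_pos.le hsup) hsup hm_pos hinf
end

section
/- For a general path-structured scaled kernel with entries T_{i_1,...,i_{n_s}} = (Π_{j=1}^{n_s−1} K^j_{i_j,i_{j+1}}) · (Π_{σ=1}^{n_s} u_σ(i_σ)), the unimarginal projection onto coordinate σ is given by proj_σ(T) = ( u_1^T K^1 Π_{j=2}^{σ−1} diag(u_j) K^j )^T ⊙ u_σ ⊙ ( (Π_{j=σ+1}^{n_s−1} K^{j−1} diag(u_j)) K^{n_s−1} u_{n_s} ), i.e., the exponential-size marginalization reduces to a product of matrix–vector operations. -/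
open scoped BigOperators

/-- Prefix vectors: `Lvec 0 = 𝟙` and
`Lvec (j+1) = ((Lvec j ⊙ u_j)^T K^j)^T`, so that
`Lvec σ = (u_0^T K^0 diag(u_1) K^1 ⋯ diag(u_{σ-1}) K^{σ-1})^T` (0-indexed). -/
noncomputable def Lvec (N : ℕ) (K : ℕ → Matrix (Fin N) (Fin N) ℝ)
    (u : ℕ → Fin N → ℝ) : ℕ → Fin N → ℝ
  | 0 => fun _ => 1
  | j + 1 => fun k => ∑ i, Lvec N K u j i * u j i * K j i k

/-- Suffix vectors (counted from the right end `m`): `Rvec m 0 = 𝟙` and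
`Rvec m (d+1) = K^{m-d-1} (u_{m-d} ⊙ Rvec m d)`, so the suffix vector at
position `σ` is `Rvec m (m - σ)`. -/
noncomputable def Rvec (N : ℕ) (K : ℕ → Matrix (Fin N) (Fin N) ℝ)
    (u : ℕ → Fin N → ℝ) (m : ℕ) : ℕ → Fin N → ℝ
  | 0 => fun _ => 1
  | d + 1 => fun i => ∑ k, K (m - (d + 1)) i k * u (m - d) k * Rvec N K u m d k

private lemma Lvec_succ {N : ℕ} (K : ℕ → Matrix (Fin N) (Fin N) ℝ)
    (u : ℕ → Fin N → ℝ) (j : ℕ) (k : Fin N) :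
    Lvec N K u (j + 1) k = ∑ i, Lvec N K u j i * u j i * K j i k := by
  conv_lhs => rw [Lvec]

private lemma Rvec_succ {N : ℕ} (K : ℕ → Matrix (Fin N) (Fin N) ℝ)
    (u : ℕ → Fin N → ℝ) (m d : ℕ) (x : Fin N) :
    Rvec N K u m (d + 1) x
      = ∑ k, K (m - (d + 1)) x k * u (m - d) k * Rvec N K u m d k := by
  conv_lhs => rw [Rvec]

private lemma Lvec_congr {N : ℕ} (K : ℕ → Matrix (Fin N) (Fin N) ℝ)
    (u v : ℕ → Fin N → ℝ) : ∀ s : ℕ, (∀ j, j < s → u j = v j) →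
    Lvec N K u s = Lvec N K v s
  | 0, _ => rfl
  | s + 1, h => by
    funext k
    rw [Lvec_succ, Lvec_succ,
      Lvec_congr K u v s fun j hj => h j (Nat.lt_succ_of_lt hj),
      h s (Nat.lt_succ_self s)]

private lemma Rvec_absorb {N : ℕ} (K : ℕ → Matrix (Fin N) (Fin N) ℝ)
    (u : ℕ → Fin N → ℝ) (m : ℕ) :
    ∀ d : ℕ, d + 1 ≤ m → ∀ x : Fin N,
      Rvec N K (Function.update u m
        (fun i => u m i * ∑ k, K m i k * u (m + 1) k)) m (d + 1) x
      = Rvec N K u (m + 1) (d + 2) x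
  | 0, hd, x => by
    rw [Rvec_succ, Rvec_succ]
    refine Finset.sum_congr rfl fun k _ => ?_
    rw [Rvec_succ]
    simp only [Rvec, Nat.sub_zero, Function.update_self, mul_one,
      show m + 1 - 2 = m - 1 from by omega, Nat.add_sub_cancel,
      Nat.sub_self]
    ring
  | d + 1, hd, x => by
    rw [Rvec_succ, Rvec_succ]
    refine Finset.sum_congr rfl fun k _ => ?_
    rw [Rvec_absorb K u m d (by omega) k,
      Function.update_of_ne (by omega),
      show m + 1 - (d + 1 + 2) = m - (d + 1 + 1) from by omega,
      show m + 1 - (d + 2) = m - (d + 1) from by omega]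

private lemma sum_fiber {α β : Type*} [Fintype α] [Fintype β] [DecidableEq β]
    (e : α → β) (f : α → ℝ) (g : β → ℝ) :
    ∑ a, f a * g (e a) = ∑ b, (∑ a, if e a = b then f a else 0) * g b := by
  simp_rw [Finset.sum_mul, ite_mul, zero_mul]
  rw [Finset.sum_comm]
  refine Finset.sum_congr rfl fun a _ => ?_
  rw [Finset.sum_ite_eq Finset.univ (e a) (fun b => f a * g b)]
  simp

private lemma main_sum {N : ℕ} (K : ℕ → Matrix (Fin N) (Fin N) ℝ) :
    ∀ (m : ℕ) (u : ℕ → Fin N → ℝ) (σ : ℕ) (hσ : σ ≤ m) (x : Fin N),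
      (∑ idx : Fin (m + 1) → Fin N,
        if idx ⟨σ, Nat.lt_succ_of_le hσ⟩ = x then
          (∏ j : Fin m, K j (idx j.castSucc) (idx j.succ)) *
            ∏ t : Fin (m + 1), u t (idx t)
        else 0)
      = Lvec N K u σ x * u σ x * Rvec N K u m (m - σ) x := by
  intro m
  induction m with
  | zero =>
    intro u σ hσ x
    obtain rfl : σ = 0 := Nat.le_zero.mp hσ
    rw [← (Equiv.funUnique (Fin 1) (Fin N)).symm.sum_comp]
    simp [Lvec, Rvec]
  | succ m IH =>
    intro u σ hσ x
    by_cases hB : σ = m + 1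
    · subst hB
      rw [← (Fin.snocEquiv (fun _ : Fin (m + 2) => Fin N)).sum_comp,
        Fintype.sum_prod_type]
      simp only [Fin.snocEquiv_apply, Fin.prod_univ_castSucc, Fin.snoc_castSucc,
        Fin.succ_castSucc, Fin.snoc_last, Fin.succ_last, Fin.coe_castSucc,
        Fin.val_last,
        show (⟨m + 1, Nat.lt_succ_of_le hσ⟩ : Fin (m + 2)) = Fin.last (m + 1) from rfl]
      have step1 : ∀ k : Fin N,
          (∑ p : Fin (m + 1) → Fin N,
            if k = x then
              (∏ j : Fin m, K j (p j.castSucc) (p j.succ)) * K m (p (Fin.last m)) k *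
                ((∏ t : Fin m, u t (p t.castSucc)) * u m (p (Fin.last m)) * u (m + 1) k)
            else 0)
          = if k = x then
              (∑ p : Fin (m + 1) → Fin N,
                (∏ j : Fin m, K j (p j.castSucc) (p j.succ)) * K m (p (Fin.last m)) x *
                  ((∏ t : Fin m, u t (p t.castSucc)) * u m (p (Fin.last m)) * u (m + 1) x))
            else 0 := by
        intro k
        split_ifs with h
        · subst h; rfl
        · simp
      rw [Finset.sum_congr rfl fun k _ => step1 k,
        Finset.sum_ite_eq' Finset.univ x, if_pos (Finset.mem_univ x)]
      have step2 : ∀ p : Fin (m + 1) → Fin N,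
          (∏ j : Fin m, K j (p j.castSucc) (p j.succ)) * K m (p (Fin.last m)) x *
            ((∏ t : Fin m, u t (p t.castSucc)) * u m (p (Fin.last m)) * u (m + 1) x)
          = ((∏ j : Fin m, K j (p j.castSucc) (p j.succ)) *
              ∏ t : Fin (m + 1), u t (p t)) *
            ((fun i => K m i x * u (m + 1) x) (p (Fin.last m))) := by
        intro p
        rw [Fin.prod_univ_castSucc (f := fun t : Fin (m + 1) => u t (p t))]
        simp only [Fin.coe_castSucc, Fin.val_last]
        ring
      rw [Finset.sum_congr rfl fun p _ => step2 p,
        sum_fiber (fun p : Fin (m + 1) → Fin N => p (Fin.last m))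
          (fun p => (∏ j : Fin m, K j (p j.castSucc) (p j.succ)) *
            ∏ t : Fin (m + 1), u t (p t))
          (fun i => K m i x * u (m + 1) x)]
      have step3 : ∀ i : Fin N,
          (∑ p : Fin (m + 1) → Fin N,
            if p (Fin.last m) = i then
              (∏ j : Fin m, K j (p j.castSucc) (p j.succ)) * ∏ t : Fin (m + 1), u t (p t)
            else 0)
          = Lvec N K u m i * u m i := by
        intro i
        have := IH u m le_rfl i
        simp only [Nat.sub_self, Rvec, mul_one] at this
        rw [← this]
        rfl
      rw [Finset.sum_congr rfl fun i _ => by rw [step3 i]]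
      simp only [Nat.sub_self, Rvec, mul_one, Lvec_succ, Finset.sum_mul]
      exact Finset.sum_congr rfl fun i _ => by ring
    · have hA : σ ≤ m := by omega
      rw [← (Fin.snocEquiv (fun _ : Fin (m + 2) => Fin N)).sum_comp,
        Fintype.sum_prod_type]
      simp only [Fin.snocEquiv_apply, Fin.prod_univ_castSucc, Fin.snoc_castSucc,
        Fin.succ_castSucc, Fin.snoc_last, Fin.succ_last, Fin.coe_castSucc,
        Fin.val_last,
        show (⟨σ, Nat.lt_succ_of_le hσ⟩ : Fin (m + 2))
          = Fin.castSucc ⟨σ, Nat.lt_succ_of_le hA⟩ from rfl]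
      rw [Finset.sum_comm]
      have step1 : ∀ p : Fin (m + 1) → Fin N,
          (∑ k : Fin N,
            if p ⟨σ, Nat.lt_succ_of_le hA⟩ = x then
              (∏ j : Fin m, K j (p j.castSucc) (p j.succ)) * K m (p (Fin.last m)) k *
                ((∏ t : Fin m, u t (p t.castSucc)) * u m (p (Fin.last m)) * u (m + 1) k)
            else 0)
          = if p ⟨σ, Nat.lt_succ_of_le hA⟩ = x then
              (∏ j : Fin m, K j (p j.castSucc) (p j.succ)) *
                ∏ t : Fin (m + 1), (Function.update u m
                  (fun i => u m i * ∑ k, K m i k * u (m + 1) k)) t (p t)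
            else 0 := by
        intro p
        split_ifs with h
        · rw [Fin.prod_univ_castSucc (f := fun t : Fin (m + 1) =>
            (Function.update u m (fun i => u m i * ∑ k, K m i k * u (m + 1) k)) t (p t))]
          simp only [Fin.coe_castSucc, Fin.val_last, Function.update_self]
          rw [Finset.prod_congr rfl fun (t : Fin m) _ =>
            congrFun (Function.update_of_ne (Nat.ne_of_lt t.isLt) _ u) (p t.castSucc)]
          rw [Finset.sum_congr rfl fun (k : Fin N) _ => show
            (∏ j : Fin m, K j (p j.castSucc) (p j.succ)) * K m (p (Fin.last m)) k *
                ((∏ t : Fin m, u t (p t.castSucc)) * u m (p (Fin.last m)) * u (m + 1) k)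
            = ((∏ j : Fin m, K j (p j.castSucc) (p j.succ)) *
                ((∏ t : Fin m, u t (p t.castSucc)) * u m (p (Fin.last m)))) *
              (K m (p (Fin.last m)) k * u (m + 1) k) from by ring,
            ← Finset.mul_sum]
          ring
        · simp
      rw [Finset.sum_congr rfl fun p _ => step1 p,
        IH (Function.update u m (fun i => u m i * ∑ k, K m i k * u (m + 1) k)) σ hA x,
        Lvec_congr K (Function.update u m (fun i => u m i * ∑ k, K m i k * u (m + 1) k)) u σ
          (fun j hj => Function.update_of_ne (by omega) _ u)]
      by_cases hσm : σ = m
      · rw [hσm]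
        rw [Function.update_self, Nat.sub_self,
          show m + 1 - m = 1 from by omega, Rvec_succ]
        simp only [Rvec, Nat.sub_zero, Nat.add_sub_cancel, mul_one]
        ring
      · rw [Function.update_of_ne (by omega) _ u,
          show m - σ = (m - σ - 1) + 1 from by omega,
          Rvec_absorb K u m (m - σ - 1) (by omega) x,
          show m - σ - 1 + 2 = m + 1 - σ from by omega]

/-- for the path-structured scaled kernel
`T_{i_0,...,i_m} = (Π_j K^j_{i_j,i_{j+1}}) (Π_σ u_σ(i_σ))`, the unimarginal
projection onto coordinate `σ` equals the componentwise product of the prefix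
matrix–vector chain, `u_σ`, and the suffix matrix–vector chain; i.e., the
exponential-size marginalization reduces to matrix–vector operations. -/
theorem unimarginal_projection_factorized {N m : ℕ} (hN : 0 < N)
    (K : ℕ → Matrix (Fin N) (Fin N) ℝ) (u : ℕ → Fin N → ℝ)
    (T : (Fin (m + 1) → Fin N) → ℝ)
    (hT : ∀ idx, T idx =
      (∏ j : Fin m, K j (idx j.castSucc) (idx j.succ)) *
        ∏ σ : Fin (m + 1), u σ (idx σ)) :
    ∀ (σ : Fin (m + 1)) (x : Fin N),
      (∑ idx ∈ Finset.univ.filter (fun idx : Fin (m + 1) → Fin N => idx σ = x),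
          T idx)
        = Lvec N K u σ x * u σ x * Rvec N K u m (m - σ) x := by
  intro σ x
  rw [Finset.sum_filter]
  simp only [hT]
  exact main_sum K m u σ.1 (Nat.lt_succ_iff.mp σ.isLt) x
end

section
/- Strong duality structure of entropic optimal transport (bimarginal case): the minimizer of ⟨C + ε log M, M⟩ over nonnegative N×N matrices M with row sums μ and column sums ν (μ, ν strictly positive probability vectors) has the form M_opt = diag(u) K diag(v) with K = exp(−C/ε) entrywise and strictly positive vectors u, v; equivalently, any M of this form that satisfies the marginal constraints is the unique optimal solution. -/
/-
For a positive feasible `M° = diag(u) K diag(v)` we have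
`ε log M°ᵢⱼ = ε log uᵢ + ε log vⱼ - Cᵢⱼ`, so the gradient `C + ε log M° + ε` of the objective at
`M°` has the form `aᵢ + bⱼ` and annihilates the difference of any two feasible plans. Expanding
the objective around `M°`, only the Bregman remainder survives:
`cost M' = cost M° + ε ∑ M°ᵢⱼ klFun (M'ᵢⱼ / M°ᵢⱼ) = cost M° + ε KL(M' ‖ M°)`,
which is `≥ cost M°` with equality only for `M' = M°`.

For existence, the continuous objective attains its minimum on the compact transport polytope at
some `M`. As `x log x` has slope `-∞` at `0`, a zero entry of `M` would let a small step towards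
`μ νᵀ` lower the cost, so `M > 0`. Stationarity of the cost at `M` along the zero-marginal
directions `(eᵢ - eᵢ')(eⱼ - eⱼ')ᵀ` then shows that `C + ε log M` is of the form `aᵢ + bⱼ`, i.e.
`M = diag(exp (a / ε)) K diag(exp (b / ε))`.
-/

open Real InformationTheory

theorem mul_add_mul_log_eq_tangent_add_klFun (c ε : ℝ) {x y : ℝ} (hx : 0 < x) (hy : 0 ≤ y) :
    y * (c + ε * log y) =
      x * (c + ε * log x) + (c + ε * log x + ε) * (y - x) + ε * (x * klFun (y / x)) := by
  rw [klFun]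
  rcases hy.eq_or_lt with rfl | hy
  · field_simp; ring
  · rw [log_div hy.ne' hx.ne']
    field_simp
    ring

theorem mul_add_mul_log_convex_comb_le (c : ℝ) {ε : ℝ} (hε : 0 ≤ ε) {a b t : ℝ} (ha : 0 ≤ a)
    (hb : 0 ≤ b) (ht₀ : 0 ≤ t) (ht₁ : t ≤ 1) :
    ((1 - t) * a + t * b) * (c + ε * log ((1 - t) * a + t * b))
      ≤ (1 - t) * (a * (c + ε * log a)) + t * (b * (c + ε * log b)) := by
  have h := convexOn_mul_log.2 (Set.mem_Ici.2 ha) (Set.mem_Ici.2 hb) (sub_nonneg.2 ht₁) ht₀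
    (sub_add_cancel 1 t)
  simp only [smul_eq_mul] at h
  nlinarith [mul_le_mul_of_nonneg_left h hε]

theorem mul_add_mul_log_mul_eq (c ε : ℝ) {b t : ℝ} (hb : 0 < b) (ht : 0 < t) :
    (t * b) * (c + ε * log (t * b)) = t * (b * (c + ε * log b)) + ε * b * (t * log t) := by
  rw [log_mul ht.ne' hb.ne']
  ring

theorem hasDerivAt_mul_add_mul_log_line (c ε : ℝ) {m : ℝ} (hm : 0 < m) (d : ℝ) :
    HasDerivAt (fun t => (m + t * d) * (c + ε * log (m + t * d)))
      (d * (c + ε * log m + ε)) 0 := by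
  have hφ : HasDerivAt (fun x => x * (c + ε * log x)) (c + ε * log m + ε) m :=
    ((hasDerivAt_id' m).mul (((hasDerivAt_log hm.ne').const_mul ε).const_add c)).congr_deriv
      (by field_simp)
  have hline : HasDerivAt (fun t : ℝ => m + t * d) d 0 := by
    simpa using ((hasDerivAt_id (0 : ℝ)).mul_const d).const_add m
  rw [mul_comm d]
  exact hφ.comp_of_eq 0 hline (by simp)

variable {ι κ : Type*} {ε : ℝ} {C K : Matrix ι κ ℝ}

theorem add_mul_log_scaling_eq (hε : ε ≠ 0) (hK : ∀ i j, K i j = exp (-C i j / ε)) {u : ι → ℝ}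
    {v : κ → ℝ} (hu : ∀ i, 0 < u i) (hv : ∀ j, 0 < v j) (i : ι) (j : κ) :
    C i j + ε * log (u i * K i j * v j) + ε = ε * log (u i) + (ε * log (v j) + ε) := by
  have hKij : 0 < K i j := hK i j ▸ exp_pos _
  rw [log_mul (mul_pos (hu i) hKij).ne' (hv j).ne', log_mul (hu i).ne' hKij.ne', hK, log_exp]
  field_simp
  ring

theorem scaling_pos (hK : ∀ i j, K i j = exp (-C i j / ε)) {u : ι → ℝ} {v : κ → ℝ}
    (hu : ∀ i, 0 < u i) (hv : ∀ j, 0 < v j) (i : ι) (j : κ) : 0 < u i * K i j * v j :=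
  mul_pos (mul_pos (hu i) (hK i j ▸ exp_pos _)) (hv j)

theorem exists_add_eq_of_add_eq_add {ψ : ι → κ → ℝ}
    (h : ∀ i i' j j', ψ i j + ψ i' j' = ψ i j' + ψ i' j) :
    ∃ (a : ι → ℝ) (b : κ → ℝ), ∀ i j, ψ i j = a i + b j := by
  rcases isEmpty_or_nonempty ι with _ | ⟨⟨i₀⟩⟩
  · exact ⟨0, 0, fun i => isEmptyElim i⟩
  rcases isEmpty_or_nonempty κ with _ | ⟨⟨j₀⟩⟩
  · exact ⟨0, 0, fun _ j => isEmptyElim j⟩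
  exact ⟨fun i => ψ i j₀ - ψ i₀ j₀, fun j => ψ i₀ j, fun i j => by linarith [h i i₀ j j₀]⟩

variable [Fintype ι] [Fintype κ]

noncomputable def entropicCost (ε : ℝ) (C M : Matrix ι κ ℝ) : ℝ :=
  ∑ i, ∑ j, M i j * (C i j + ε * log (M i j))

def transportPolytope (μ : ι → ℝ) (ν : κ → ℝ) : Set (Matrix ι κ ℝ) :=
  {M | (∀ i j, 0 ≤ M i j) ∧ (∀ i, ∑ j, M i j = μ i) ∧ (∀ j, ∑ i, M i j = ν j)}

variable {M M' : Matrix ι κ ℝ} {μ : ι → ℝ} {ν : κ → ℝ}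

theorem isClosed_transportPolytope (μ : ι → ℝ) (ν : κ → ℝ) :
    IsClosed (transportPolytope μ ν) := by
  simp only [transportPolytope, Set.ofPred_and, Set.ofPred_forall]
  refine .inter (isClosed_iInter fun i => isClosed_iInter fun j => isClosed_le ?_ ?_)
    (.inter (isClosed_iInter fun i => isClosed_eq ?_ ?_)
      (isClosed_iInter fun j => isClosed_eq ?_ ?_)) <;> fun_prop

theorem isCompact_transportPolytope (μ : ι → ℝ) (ν : κ → ℝ) :
    IsCompact (transportPolytope μ ν) := by
  refine (isCompact_Icc (a := 0) (b := fun i _ => μ i)).of_isClosed_subset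
    (isClosed_transportPolytope μ ν) fun M hM => ⟨fun i j => hM.1 i j, fun i j => ?_⟩
  show M i j ≤ μ i
  rw [← hM.2.1 i]
  exact Finset.single_le_sum (fun j _ => hM.1 i j) (Finset.mem_univ j)

theorem convex_transportPolytope (μ : ι → ℝ) (ν : κ → ℝ) :
    Convex ℝ (transportPolytope μ ν) := by
  rintro M ⟨hM₀, hMr, hMc⟩ M' ⟨hM'₀, hM'r, hM'c⟩ a b ha hb hab
  refine ⟨fun i j => ?_, fun i => ?_, fun j => ?_⟩
  · simp only [Matrix.add_apply, Matrix.smul_apply, smul_eq_mul]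
    exact add_nonneg (mul_nonneg ha (hM₀ i j)) (mul_nonneg hb (hM'₀ i j))
  · simp only [Matrix.add_apply, Matrix.smul_apply, smul_eq_mul, Finset.sum_add_distrib,
      ← Finset.mul_sum, hMr, hM'r, ← add_mul, hab, one_mul]
  · simp only [Matrix.add_apply, Matrix.smul_apply, smul_eq_mul, Finset.sum_add_distrib,
      ← Finset.mul_sum, hMc, hM'c, ← add_mul, hab, one_mul]

theorem vecMulVec_mem_transportPolytope (hμ : ∀ i, 0 ≤ μ i) (hν : ∀ j, 0 ≤ ν j)
    (hμs : ∑ i, μ i = 1) (hνs : ∑ j, ν j = 1) :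
    Matrix.vecMulVec μ ν ∈ transportPolytope μ ν := by
  refine ⟨fun i j => mul_nonneg (hμ i) (hν j), fun i => ?_, fun j => ?_⟩
  · simp only [Matrix.vecMulVec_apply, ← Finset.mul_sum, hνs, mul_one]
  · simp only [Matrix.vecMulVec_apply, ← Finset.sum_mul, hμs, one_mul]

theorem continuous_entropicCost (ε : ℝ) (C : Matrix ι κ ℝ) : Continuous (entropicCost ε C) := by
  have h : entropicCost ε C = fun M : Matrix ι κ ℝ =>
      ∑ i, ∑ j, (M i j * C i j + ε * (M i j * log (M i j))) := by
    ext M; simp only [entropicCost, mul_add, mul_left_comm]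
  rw [h]
  have hmul_log := continuous_mul_log
  fun_prop

theorem exists_isMinOn_entropicCost (ε : ℝ) (C : Matrix ι κ ℝ) (hμ : ∀ i, 0 ≤ μ i)
    (hν : ∀ j, 0 ≤ ν j) (hμs : ∑ i, μ i = 1) (hνs : ∑ j, ν j = 1) :
    ∃ M ∈ transportPolytope μ ν, IsMinOn (entropicCost ε C) (transportPolytope μ ν) M :=
  (isCompact_transportPolytope μ ν).exists_isMinOn
    ⟨_, vecMulVec_mem_transportPolytope hμ hν hμs hνs⟩ (continuous_entropicCost ε C).continuousOn

theorem entropicCost_eq_add_sum_add_klFun (hM : ∀ i j, 0 < M i j) (hM' : ∀ i j, 0 ≤ M' i j) :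
    entropicCost ε C M' = entropicCost ε C M
      + ∑ i, ∑ j, (C i j + ε * log (M i j) + ε) * (M' i j - M i j)
      + ε * ∑ i, ∑ j, M i j * klFun (M' i j / M i j) := by
  simp only [entropicCost, Finset.mul_sum, ← Finset.sum_add_distrib]
  exact Fintype.sum_congr _ _ fun i => Fintype.sum_congr _ _ fun j =>
    mul_add_mul_log_eq_tangent_add_klFun _ _ (hM i j) (hM' i j)

theorem sum_add_mul_sub_eq_zero (a : ι → ℝ) (b : κ → ℝ) (hM : M ∈ transportPolytope μ ν)
    (hM' : M' ∈ transportPolytope μ ν) :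
    ∑ i, ∑ j, (a i + b j) * (M' i j - M i j) = 0 := by
  have hrow i : ∑ j, (M' i j - M i j) = 0 := by
    rw [Finset.sum_sub_distrib, hM.2.1, hM'.2.1, sub_self]
  have hcol j : ∑ i, (M' i j - M i j) = 0 := by
    rw [Finset.sum_sub_distrib, hM.2.2, hM'.2.2, sub_self]
  simp only [add_mul, Finset.sum_add_distrib, ← Finset.mul_sum, hrow, mul_zero,
    zero_add]
  rw [Finset.sum_comm]
  simp only [← Finset.mul_sum, hcol, mul_zero, Finset.sum_const_zero]

theorem entropicCost_eq_scaling_add_klFun (hε : ε ≠ 0) (hK : ∀ i j, K i j = exp (-C i j / ε))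
    {u : ι → ℝ} {v : κ → ℝ} (hu : ∀ i, 0 < u i) (hv : ∀ j, 0 < v j)
    (hs : (fun i j => u i * K i j * v j) ∈ transportPolytope μ ν)
    (hM' : M' ∈ transportPolytope μ ν) :
    entropicCost ε C M' = entropicCost ε C (fun i j => u i * K i j * v j)
      + ε * ∑ i, ∑ j, u i * K i j * v j * klFun (M' i j / (u i * K i j * v j)) := by
  rw [entropicCost_eq_add_sum_add_klFun (scaling_pos hK hu hv) hM'.1]
  simp only [add_mul_log_scaling_eq hε hK hu hv]
  rw [sum_add_mul_sub_eq_zero _ _ hs hM', add_zero]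

theorem entropicCost_scaling_le (hε : 0 < ε) (hK : ∀ i j, K i j = exp (-C i j / ε))
    {u : ι → ℝ} {v : κ → ℝ} (hu : ∀ i, 0 < u i) (hv : ∀ j, 0 < v j)
    (hs : (fun i j => u i * K i j * v j) ∈ transportPolytope μ ν)
    (hM' : M' ∈ transportPolytope μ ν) :
    entropicCost ε C (fun i j => u i * K i j * v j) ≤ entropicCost ε C M' := by
  rw [entropicCost_eq_scaling_add_klFun hε.ne' hK hu hv hs hM', le_add_iff_nonneg_right]
  refine mul_nonneg hε.le (Finset.sum_nonneg fun i _ => Finset.sum_nonneg fun j _ => ?_)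
  have hpos := scaling_pos hK hu hv i j
  exact mul_nonneg hpos.le (klFun_nonneg (div_nonneg (hM'.1 i j) hpos.le))

theorem eq_scaling_of_entropicCost_eq (hε : 0 < ε) (hK : ∀ i j, K i j = exp (-C i j / ε))
    {u : ι → ℝ} {v : κ → ℝ} (hu : ∀ i, 0 < u i) (hv : ∀ j, 0 < v j)
    (hs : (fun i j => u i * K i j * v j) ∈ transportPolytope μ ν)
    (hM' : M' ∈ transportPolytope μ ν)
    (heq : entropicCost ε C M' = entropicCost ε C (fun i j => u i * K i j * v j)) :
    M' = fun i j => u i * K i j * v j := by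
  have hpos := scaling_pos hK hu hv
  have hkl i j : 0 ≤ u i * K i j * v j * klFun (M' i j / (u i * K i j * v j)) :=
    mul_nonneg (hpos i j).le (klFun_nonneg (div_nonneg (hM'.1 i j) (hpos i j).le))
  rw [entropicCost_eq_scaling_add_klFun hε.ne' hK hu hv hs hM', add_eq_left,
    mul_eq_zero, or_iff_right hε.ne', Fintype.sum_eq_zero_iff_of_nonneg
      fun i => Finset.sum_nonneg fun j _ => hkl i j] at heq
  funext i j
  have hij := congrFun ((Fintype.sum_eq_zero_iff_of_nonneg (hkl i)).1 (congrFun heq i)) j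
  rw [Pi.zero_apply, mul_eq_zero, or_iff_right (hpos i j).ne',
    klFun_eq_zero_iff (div_nonneg (hM'.1 i j) (hpos i j).le),
    div_eq_one_iff_eq (hpos i j).ne'] at hij
  exact hij

theorem pos_of_isMinOn_entropicCost (hε : 0 < ε) (hμ : ∀ i, 0 < μ i) (hν : ∀ j, 0 < ν j)
    (hμs : ∑ i, μ i = 1) (hνs : ∑ j, ν j = 1) (hM : M ∈ transportPolytope μ ν)
    (hmin : IsMinOn (entropicCost ε C) (transportPolytope μ ν) M) (i j) : 0 < M i j := by
  classical
  refine (hM.1 i j).lt_of_ne' fun h₀ => ?_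
  set P := Matrix.vecMulVec μ ν
  have hP : P ∈ transportPolytope μ ν :=
    vecMulVec_mem_transportPolytope (fun i => (hμ i).le) (fun j => (hν j).le) hμs hνs
  have hPij : 0 < P i j := mul_pos (hμ i) (hν j)
  set A := entropicCost ε C P - entropicCost ε C M
  have hA : 0 ≤ A := sub_nonneg.2 (isMinOn_iff.1 hmin P hP)
  set t := exp (-(A + 1) / (ε * P i j))
  have ht : 0 < t := exp_pos _
  have ht₁ : t ≤ 1 :=
    exp_le_one_iff.2 (div_nonpos_of_nonpos_of_nonneg (by linarith) (by positivity))
  have hlog : ε * P i j * (t * log t) = -(t * (A + 1)) := by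
    simp only [t, log_exp]; field_simp
  set Mt := (1 - t) • M + t • P
  have hMt : Mt ∈ transportPolytope μ ν :=
    convex_transportPolytope μ ν hM hP (sub_nonneg.2 ht₁) ht.le (sub_add_cancel 1 t)
  have hentry i' j' : Mt i' j' * (C i' j' + ε * log (Mt i' j'))
      ≤ (1 - t) * (M i' j' * (C i' j' + ε * log (M i' j')))
        + t * (P i' j' * (C i' j' + ε * log (P i' j')))
        + if i' = i then if j' = j then ε * P i j * (t * log t) else 0 else 0 := by
    -- convexity bound, plus the exact `t log t` term at the zero entry, which beats any `O(t)`
    simp only [Mt, Matrix.add_apply, Matrix.smul_apply, smul_eq_mul]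
    split_ifs with hi hj
    · subst hi hj
      rw [h₀, mul_zero, zero_add, mul_add_mul_log_mul_eq _ _ hPij ht]
      simp
    all_goals
      rw [add_zero]
      exact mul_add_mul_log_convex_comb_le _ hε.le (hM.1 i' j') (hP.1 i' j') ht.le ht₁
  have hcost : entropicCost ε C Mt ≤ entropicCost ε C M - t := by
    calc entropicCost ε C Mt
        ≤ (1 - t) * entropicCost ε C M + t * entropicCost ε C P + ε * P i j * (t * log t) := by
          simp only [entropicCost, Finset.mul_sum]
          refine (Finset.sum_le_sum fun i' _ => Finset.sum_le_sum fun j' _ => hentry i' j').trans ?_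
          simp [Finset.sum_add_distrib]
      _ = entropicCost ε C M - t := by rw [hlog]; ring
  linarith [isMinOn_iff.1 hmin Mt hMt]

theorem hasDerivAt_entropicCost_line (ε : ℝ) (C : Matrix ι κ ℝ) (hpos : ∀ i j, 0 < M i j)
    (D : Matrix ι κ ℝ) :
    HasDerivAt (fun t : ℝ => entropicCost ε C (M + t • D))
      (∑ i, ∑ j, D i j * (C i j + ε * log (M i j) + ε)) 0 := by
  simp only [entropicCost, Matrix.add_apply, Matrix.smul_apply, smul_eq_mul]
  exact .fun_sum fun i _ => .fun_sum fun j _ => hasDerivAt_mul_add_mul_log_line _ _ (hpos i j) _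

theorem sum_mul_eq_zero_of_isMinOn_entropicCost (hM : M ∈ transportPolytope μ ν)
    (hmin : IsMinOn (entropicCost ε C) (transportPolytope μ ν) M) (hpos : ∀ i j, 0 < M i j)
    {D : Matrix ι κ ℝ} (hDr : ∀ i, ∑ j, D i j = 0) (hDc : ∀ j, ∑ i, D i j = 0) :
    ∑ i, ∑ j, D i j * (C i j + ε * log (M i j) + ε) = 0 := by
  refine IsLocalMin.hasDerivAt_eq_zero ?_ (hasDerivAt_entropicCost_line ε C hpos D)
  have hnear : ∀ᶠ t in nhds (0 : ℝ), ∀ i j, 0 < M i j + t * D i j :=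
    Filter.eventually_all.2 fun i => Filter.eventually_all.2 fun j =>
      continuousAt_const.eventually_lt (by fun_prop) (by simpa using hpos i j)
  filter_upwards [hnear] with t ht
  have hMt : M + t • D ∈ transportPolytope μ ν := by
    simp only [transportPolytope, Set.mem_ofPred_eq, Matrix.add_apply, Matrix.smul_apply,
      smul_eq_mul, Finset.sum_add_distrib, ← Finset.mul_sum, hDr, hDc, mul_zero, add_zero]
    exact ⟨fun i j => (ht i j).le, hM.2⟩
  simpa using isMinOn_iff.1 hmin _ hMt

theorem add_eq_add_of_isMinOn_entropicCost (hM : M ∈ transportPolytope μ ν)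
    (hmin : IsMinOn (entropicCost ε C) (transportPolytope μ ν) M) (hpos : ∀ i j, 0 < M i j)
    (i i' : ι) (j j' : κ) :
    C i j + ε * log (M i j) + (C i' j' + ε * log (M i' j'))
      = C i j' + ε * log (M i j') + (C i' j + ε * log (M i' j)) := by
  classical
  set x : ι → ℝ := Pi.single i 1 - Pi.single i' 1
  set y : κ → ℝ := Pi.single j 1 - Pi.single j' 1
  have hx : ∑ a, x a = 0 := by simp [x, Finset.sum_sub_distrib]
  have hy : ∑ b, y b = 0 := by simp [y, Finset.sum_sub_distrib]
  have h := sum_mul_eq_zero_of_isMinOn_entropicCost hM hmin hpos (D := Matrix.vecMulVec x y)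
    (by simp [Matrix.vecMulVec_apply, ← Finset.mul_sum, hy])
    (by simp [Matrix.vecMulVec_apply, ← Finset.sum_mul, hx])
  simp [Matrix.vecMulVec_apply, x, y, Pi.single_apply, sub_mul, mul_sub,
    Finset.sum_sub_distrib] at h
  linarith

theorem exists_scaling_eq_of_isMinOn_entropicCost (hε : ε ≠ 0)
    (hK : ∀ i j, K i j = exp (-C i j / ε)) (hM : M ∈ transportPolytope μ ν)
    (hmin : IsMinOn (entropicCost ε C) (transportPolytope μ ν) M) (hpos : ∀ i j, 0 < M i j) :
    ∃ (u : ι → ℝ) (v : κ → ℝ), (∀ i, 0 < u i) ∧ (∀ j, 0 < v j) ∧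
      M = fun i j => u i * K i j * v j := by
  obtain ⟨a, b, hab⟩ :=
    exists_add_eq_of_add_eq_add (add_eq_add_of_isMinOn_entropicCost hM hmin hpos)
  refine ⟨fun i => exp (a i / ε), fun j => exp (b j / ε), fun i => exp_pos _, fun j => exp_pos _,
    ?_⟩
  funext i j
  rw [hK, ← exp_add, ← exp_add, ← exp_log (hpos i j)]
  congr 1
  field_simp
  linarith [hab i j]

theorem entropic_ot_diag_scaling_optimality_general {N : ℕ}
    (C : Matrix (Fin N) (Fin N) ℝ) (ε : ℝ) (hε : 0 < ε)
    (K : Matrix (Fin N) (Fin N) ℝ)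
    (hK : ∀ i j, K i j = Real.exp (-(C i j) / ε))
    (μ ν : Fin N → ℝ) (hμ : ∀ i, 0 < μ i) (hν : ∀ j, 0 < ν j)
    (hμs : ∑ i, μ i = 1) (hνs : ∑ j, ν j = 1) :
    -- existence: there is an optimal solution of the scaled form
    (∃ u v : Fin N → ℝ, (∀ i, 0 < u i) ∧ (∀ j, 0 < v j) ∧
      (∀ i, ∑ j, u i * K i j * v j = μ i) ∧
      (∀ j, ∑ i, u i * K i j * v j = ν j) ∧
      ∀ M' : Matrix (Fin N) (Fin N) ℝ, (∀ i j, 0 ≤ M' i j) →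
        (∀ i, ∑ j, M' i j = μ i) → (∀ j, ∑ i, M' i j = ν j) →
        (∑ i, ∑ j, (u i * K i j * v j) *
            (C i j + ε * Real.log (u i * K i j * v j)))
          ≤ ∑ i, ∑ j, M' i j * (C i j + ε * Real.log (M' i j))) ∧
    -- uniqueness: any feasible matrix of the scaled form is the unique optimum
    (∀ u v : Fin N → ℝ, (∀ i, 0 < u i) → (∀ j, 0 < v j) →
      (∀ i, ∑ j, u i * K i j * v j = μ i) →
      (∀ j, ∑ i, u i * K i j * v j = ν j) →
      ∀ M' : Matrix (Fin N) (Fin N) ℝ, (∀ i j, 0 ≤ M' i j) →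
        (∀ i, ∑ j, M' i j = μ i) → (∀ j, ∑ i, M' i j = ν j) →
        ((∑ i, ∑ j, (u i * K i j * v j) *
            (C i j + ε * Real.log (u i * K i j * v j)))
          ≤ ∑ i, ∑ j, M' i j * (C i j + ε * Real.log (M' i j))) ∧
        ((∑ i, ∑ j, M' i j * (C i j + ε * Real.log (M' i j)))
            = (∑ i, ∑ j, (u i * K i j * v j) *
                (C i j + ε * Real.log (u i * K i j * v j))) →
          M' = fun i j => u i * K i j * v j)) := by
  refine ⟨?_, fun u v hu hv hr hc M' hM'₀ hr' hc' => ?_⟩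
  · obtain ⟨M, hM, hmin⟩ := exists_isMinOn_entropicCost ε C (fun i => (hμ i).le)
      (fun j => (hν j).le) hμs hνs
    obtain ⟨u, v, hu, hv, rfl⟩ := exists_scaling_eq_of_isMinOn_entropicCost hε.ne' hK hM hmin
      (pos_of_isMinOn_entropicCost hε hμ hν hμs hνs hM hmin)
    exact ⟨u, v, hu, hv, hM.2.1, hM.2.2, fun M' h₀ hr hc => isMinOn_iff.1 hmin M' ⟨h₀, hr, hc⟩⟩
  · have hs : (fun i j => u i * K i j * v j) ∈ transportPolytope μ ν :=
      ⟨fun i j => (scaling_pos hK hu hv i j).le, hr, hc⟩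
    have hM' : M' ∈ transportPolytope μ ν := ⟨hM'₀, hr', hc'⟩
    exact ⟨entropicCost_scaling_le hε hK hu hv hs hM',
      eq_scaling_of_entropicCost_eq hε hK hu hv hs hM'⟩

/-- Strong duality structure of bimarginal entropic optimal
transport: the minimizer of `⟨C + ε log M, M⟩` over nonnegative matrices with
row sums `μ` and column sums `ν` has the form `M_opt = diag(u) K diag(v)` with
`K = exp(−C/ε)` and `u, v > 0`; equivalently, any `M` of this form satisfying
the marginal constraints is the unique optimal solution. -/
theorem entropic_ot_diag_scaling_optimality {N : ℕ} (hN : 0 < N)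
    (C : Matrix (Fin N) (Fin N) ℝ) (ε : ℝ) (hε : 0 < ε)
    (K : Matrix (Fin N) (Fin N) ℝ)
    (hK : ∀ i j, K i j = Real.exp (-(C i j) / ε))
    (μ ν : Fin N → ℝ) (hμ : ∀ i, 0 < μ i) (hν : ∀ j, 0 < ν j)
    (hμs : ∑ i, μ i = 1) (hνs : ∑ j, ν j = 1) :
    -- existence: there is an optimal solution of the scaled form
    (∃ u v : Fin N → ℝ, (∀ i, 0 < u i) ∧ (∀ j, 0 < v j) ∧
      (∀ i, ∑ j, u i * K i j * v j = μ i) ∧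
      (∀ j, ∑ i, u i * K i j * v j = ν j) ∧
      ∀ M' : Matrix (Fin N) (Fin N) ℝ, (∀ i j, 0 ≤ M' i j) →
        (∀ i, ∑ j, M' i j = μ i) → (∀ j, ∑ i, M' i j = ν j) →
        (∑ i, ∑ j, (u i * K i j * v j) *
            (C i j + ε * Real.log (u i * K i j * v j)))
          ≤ ∑ i, ∑ j, M' i j * (C i j + ε * Real.log (M' i j))) ∧
    -- uniqueness: any feasible matrix of the scaled form is the unique optimum
    (∀ u v : Fin N → ℝ, (∀ i, 0 < u i) → (∀ j, 0 < v j) →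
      (∀ i, ∑ j, u i * K i j * v j = μ i) →
      (∀ j, ∑ i, u i * K i j * v j = ν j) →
      ∀ M' : Matrix (Fin N) (Fin N) ℝ, (∀ i j, 0 ≤ M' i j) →
        (∀ i, ∑ j, M' i j = μ i) → (∀ j, ∑ i, M' i j = ν j) →
        ((∑ i, ∑ j, (u i * K i j * v j) *
            (C i j + ε * Real.log (u i * K i j * v j)))
          ≤ ∑ i, ∑ j, M' i j * (C i j + ε * Real.log (M' i j))) ∧
        ((∑ i, ∑ j, M' i j * (C i j + ε * Real.log (M' i j)))
            = (∑ i, ∑ j, (u i * K i j * v j) *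
                (C i j + ε * Real.log (u i * K i j * v j))) →
          M' = fun i j => u i * K i j * v j)) :=
  entropic_ot_diag_scaling_optimality_general C ε hε K hK μ ν hμ hν hμs hνs
end
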